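/- The number of semistandard Young tableaux of shape (k-1, k-2, ..., 1, 0) with entries in {1,...,k} equals 2^{k(k-1)/2}. -/

import Mathlib

/-!
Deleting the entries `r + 1` from a tableau of shape `λ` with entries `≤ r + 1` leaves a tableau
of a shape `μ` interlacing `λ` (`λ / μ` is a horizontal strip), so the number of tableaux obeys
the Gelfand–Tsetlin recursion `N_{r+1}(λ) = ∑_μ N_r(μ)`. Weyl's expression
`Δ(λ_{r-1-i} + i) / Δ(i)`, with `Δ` the Vandermonde determinant, obeys the same recursion: by
multilinearity, the sum of `Δ` over the box of interlacing shapes is a determinant of power sums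
`∑_{a ≤ s < b} s ^ p`, and replacing the Vandermonde columns `x ^ j` by the monic Bernoulli
polynomials `B_j`, whose differences `B_{p+1}(b) - B_{p+1}(a)` are `p + 1` times these power
sums, identifies it with `Δ` of one more variable divided by `r!`. For the staircase the
arguments of `Δ` become `2 i`, and `Δ(2 i) = 2 ^ (k (k - 1) / 2) Δ(i)`.
-/

/-- A semistandard Young tableau with entries in `{1, ..., k}` of the shape
whose `i`-th row (0-indexed) has length `ρ i`. -/
structure SSYT (k : ℕ) (ρ : ℕ → ℕ) where
  entry : ℕ → ℕ → ℕ
  zero_outside : ∀ i j, ρ i ≤ j → entry i j = 0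
  one_le : ∀ i j, j < ρ i → 1 ≤ entry i j
  le_k : ∀ i j, j < ρ i → entry i j ≤ k
  row_weak : ∀ i j₁ j₂, j₁ ≤ j₂ → j₂ < ρ i → entry i j₁ ≤ entry i j₂
  col_strict : ∀ i₁ i₂ j, i₁ < i₂ → j < ρ i₂ → entry i₁ j < entry i₂ j

open Finset Matrix
open scoped Nat

theorem Polynomial.natDegree_bernoulli (n : ℕ) : (bernoulli n).natDegree = n := by
  refine natDegree_eq_of_le_of_coeff_ne_zero
    (natDegree_le_iff_coeff_eq_zero.2 fun i hi => ?_) (by simp [coeff_bernoulli])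
  simp [coeff_bernoulli, not_le.2 hi]

theorem Polynomial.monic_bernoulli (n : ℕ) : (bernoulli n).Monic := by
  simp [Monic, leadingCoeff, natDegree_bernoulli, coeff_bernoulli]

theorem Matrix.sum_piFinset_det_eq_det_sum {n ι R : Type*} [Fintype n] [DecidableEq n]
    [CommRing R] (A : n → Finset ι) (g : n → ι → n → R) :
    ∑ x ∈ Fintype.piFinset A, (of fun i j => g i (x i) j).det
      = (of fun i j => ∑ t ∈ A i, g i t j).det := by
  have h := (detRowAlternating : (n → R) [⋀^n]→ₗ[R] R).map_sum_finset g A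
  simp only [Finset.sum_fn] at h
  exact h.symm

theorem Matrix.det_eq_det_succ_sub_castSucc_of_col_zero_eq_one {R : Type*} [CommRing R] {m : ℕ}
    (M : Matrix (Fin (m + 1)) (Fin (m + 1)) R) (hM : ∀ i, M i 0 = 1) :
    M.det = (of fun i j : Fin m => M i.succ j.succ - M i.castSucc j.succ).det := by
  let N : Matrix (Fin (m + 1)) (Fin (m + 1)) R :=
    of fun i j => Fin.cases (M 0 j) (fun i => M i.succ j - M i.castSucc j) i
  have hMN : M.det = N.det :=
    det_eq_of_forall_row_eq_smul_add_pred (fun _ => 1) (fun j => rfl) (fun i j => by simp [N])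
  rw [hMN, det_succ_column_zero, Fin.sum_univ_succ]
  simp [N, hM]
  rfl

theorem Matrix.det_vandermonde_const_mul {R : Type*} [CommRing R] {n : ℕ} (c : R)
    (v : Fin n → R) :
    (vandermonde fun i => c * v i).det = c ^ (n * (n - 1) / 2) * (vandermonde v).det := by
  have h := det_mul_row (fun j : Fin n => c ^ (j : ℕ)) (vandermonde v)
  rw [prod_pow_eq_pow_sum, Fin.sum_univ_eq_sum_range (fun j => j), sum_range_id] at h
  rw [← h]
  congr 1
  ext i j
  simp [mul_pow]

theorem factorial_mul_sum_det_vandermonde_Ico {m : ℕ} (B : Fin (m + 1) → ℕ)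
    (hB : ∀ i : Fin m, B i.castSucc ≤ B i.succ) :
    (m ! : ℚ) * ∑ x ∈ Fintype.piFinset fun i : Fin m => Ico (B i.castSucc) (B i.succ),
        (vandermonde fun i => (x i : ℚ)).det
      = (vandermonde fun i => (B i : ℚ)).det := by
  have hrow (i : Fin m) (p : ℕ) :
      (Polynomial.bernoulli (p + 1)).eval (B i.succ : ℚ)
        - (Polynomial.bernoulli (p + 1)).eval (B i.castSucc : ℚ)
        = (p + 1) * ∑ s ∈ Ico (B i.castSucc) (B i.succ), (s : ℚ) ^ p := by
    rw [Polynomial.bernoulli_succ_eval, Polynomial.bernoulli_succ_eval, sum_Ico_eq_sub _ (hB i)]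
    ring
  rw [det_eval_matrixOfPolynomials_eq_det_vandermonde _ _
    (fun j => Polynomial.natDegree_bernoulli j) (fun j => Polynomial.monic_bernoulli j),
    det_eq_det_succ_sub_castSucc_of_col_zero_eq_one _ (by simp)]
  simp only [of_apply, Fin.val_succ, hrow]
  refine Eq.trans ?_ (Eq.symm <| det_mul_row (fun j : Fin m => ((j : ℕ) : ℚ) + 1)
    (of fun i (j : Fin m) => ∑ s ∈ Ico (B i.castSucc) (B i.succ), (s : ℚ) ^ (j : ℕ)))
  rw [← sum_piFinset_det_eq_det_sum, Fin.prod_univ_eq_prod_range (fun j => (j : ℚ) + 1)]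
  push_cast [← prod_range_add_one_eq_factorial]
  rfl

theorem factorial_mul_det_vandermonde_id (r : ℕ) :
    (r ! : ℚ) * (vandermonde fun i : Fin r => (i : ℚ)).det
      = (vandermonde fun i : Fin (r + 1) => (i : ℚ)).det := by
  simpa [Nat.Ico_succ_singleton, Fintype.piFinset_singleton] using
    factorial_mul_sum_det_vandermonde_Ico (fun i : Fin (r + 1) => (i : ℕ)) fun i => by simp

theorem lt_card_filter_range_iff {n j : ℕ} {p : ℕ → Prop} [DecidablePred p]
    (hp : ∀ i j, i ≤ j → j < n → p j → p i) :
    j < #{i ∈ range n | p i} ↔ j < n ∧ p j := by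
  have hlower : IsLowerSet (({i ∈ range n | p i} : Finset ℕ) : Set ℕ) := by
    intro a b hba hb
    simp only [coe_filter, mem_range, Set.mem_ofPred_eq] at hb ⊢
    exact ⟨hba.trans_lt hb.1, hp b a hba hb.1 hb.2⟩
  obtain ⟨c, hc⟩ := hlower.eq_univ_or_Iio.resolve_left fun h =>
    Set.infinite_univ (h ▸ finite_toSet _)
  have hrange : ({i ∈ range n | p i} : Finset ℕ) = range c := by
    rw [← coe_inj, hc, coe_range]
  rw [hrange, card_range, ← mem_range, ← hrange, mem_filter, mem_range]

/-- The skew shape `l / μ` is a horizontal strip. -/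
def Interlaces (μ l : ℕ → ℕ) : Prop := ∀ i, l (i + 1) ≤ μ i ∧ μ i ≤ l i

theorem Interlaces.antitone {μ l : ℕ → ℕ} (h : Interlaces μ l) : Antitone μ :=
  antitone_nat_of_succ_le fun i => (h (i + 1)).2.trans (h i).1

attribute [ext] SSYT

namespace SSYT

variable {k r : ℕ} {l μ : ℕ → ℕ}

theorem entry_le (T : SSYT k l) (i j : ℕ) : T.entry i j ≤ k := by
  by_cases h : j < l i
  · exact T.le_k i j h
  · simp [T.zero_outside i j (not_lt.1 h)]

theorem succ_le_entry (hl : Antitone l) (T : SSYT k l) {i j : ℕ} (hj : j < l i) :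
    i + 1 ≤ T.entry i j := by
  induction i with
  | zero => exact T.one_le 0 j hj
  | succ i ih =>
    have := ih (hj.trans_le (hl i.le_succ))
    have := T.col_strict i (i + 1) j i.lt_succ_self hj
    omega

theorem finite (hl : Antitone l) : Finite (SSYT k l) := by
  refine Finite.of_injective (fun T (i : Fin k) (j : Fin (l 0)) =>
    (⟨T.entry i j, Nat.lt_succ_of_le (T.entry_le i j)⟩ : Fin (k + 1))) fun T U h => ?_
  ext i j
  by_cases hj : j < l i
  · have hi : i < k := by
      have := T.succ_le_entry hl hj
      have := T.entry_le i j
      omega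
    simpa using congrFun (congrFun h ⟨i, hi⟩) ⟨j, hj.trans_le (hl (Nat.zero_le i))⟩
  · rw [T.zero_outside i j (not_lt.1 hj), U.zero_outside i j (not_lt.1 hj)]

theorem card_eq_one_of_shape_eq_zero (hl : ∀ i, l i = 0) : Nat.card (SSYT 0 l) = 1 := by
  refine Nat.card_eq_one_iff_unique.2
    ⟨⟨fun T U => ?_⟩, ⟨⟨fun _ _ => 0, ?_, ?_, ?_, ?_, ?_⟩⟩⟩
  · ext i j
    rw [T.zero_outside i j (by simp [hl]), U.zero_outside i j (by simp [hl])]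
  all_goals simp [hl]

def innerShape (r : ℕ) (T : SSYT k l) (i : ℕ) : ℕ :=
  #{j ∈ range (l i) | T.entry i j ≤ r}

theorem lt_innerShape_iff (T : SSYT k l) {i j : ℕ} :
    j < T.innerShape r i ↔ j < l i ∧ T.entry i j ≤ r :=
  lt_card_filter_range_iff fun _ _ hab hb h => (T.row_weak i _ _ hab hb).trans h

theorem innerShape_le (T : SSYT k l) (i : ℕ) : T.innerShape r i ≤ l i :=
  (card_filter_le _ _).trans (card_range _).le

theorem le_innerShape (hl : Antitone l) (T : SSYT (r + 1) l) (i : ℕ) :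
    l (i + 1) ≤ T.innerShape r i := by
  by_contra! hlt
  have := T.col_strict i (i + 1) (T.innerShape r i) i.lt_succ_self hlt
  have := T.entry_le (i + 1) (T.innerShape r i)
  have := (T.lt_innerShape_iff (r := r)).2 ⟨hlt.trans_le (hl i.le_succ), by omega⟩
  omega

theorem innerShape_eq_zero (hl : Antitone l) (T : SSYT k l) {i : ℕ} (hi : r ≤ i) :
    T.innerShape r i = 0 := by
  by_contra h
  obtain ⟨h0, hle⟩ := T.lt_innerShape_iff.1 (Nat.pos_of_ne_zero h)
  have := T.succ_le_entry hl h0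
  omega

def addStrip (hl : Antitone l) (hμ : Interlaces μ l) (U : SSYT r μ) : SSYT (r + 1) l where
  entry i j := if j < μ i then U.entry i j else if j < l i then r + 1 else 0
  zero_outside i j hj := by
    have := (hμ i).2
    rw [if_neg (by omega), if_neg (by omega)]
  one_le i j hj := by
    split_ifs with h
    · exact U.one_le i j h
    · omega
  le_k i j hj := by
    split_ifs with h
    · exact (U.le_k i j h).trans r.le_succ
    · rfl
  row_weak i j₁ j₂ h12 hj₂ := by
    have := U.entry_le i j₁
    split_ifs <;> first | omega | exact U.row_weak i j₁ j₂ h12 ‹_›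
  col_strict i₁ i₂ j h12 hj₂ := by
    have := U.entry_le i₁ j
    have := (hμ i₁).1
    have := (hμ i₂).2
    have := hl (show i₁ + 1 ≤ i₂ from h12)
    have := hl h12.le
    split_ifs <;> first | omega | exact U.col_strict i₁ i₂ j h12 ‹_›

def restrict (hl : Antitone l) (T : SSYT (r + 1) l) (hT : T.innerShape r = μ) : SSYT r μ where
  entry i j := if j < μ i then T.entry i j else 0
  zero_outside i j hj := if_neg (by omega)
  one_le i j hj := by
    subst hT
    rw [if_pos hj]
    exact T.one_le i j (T.lt_innerShape_iff.1 hj).1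
  le_k i j hj := by
    subst hT
    rw [if_pos hj]
    exact (T.lt_innerShape_iff.1 hj).2
  row_weak i j₁ j₂ h12 hj₂ := by
    subst hT
    rw [if_pos hj₂, if_pos (by omega)]
    exact T.row_weak i j₁ j₂ h12 (T.lt_innerShape_iff.1 hj₂).1
  col_strict i₁ i₂ j h12 hj₂ := by
    subst hT
    obtain ⟨hj, hle⟩ := T.lt_innerShape_iff.1 hj₂
    have hlt := T.col_strict i₁ i₂ j h12 hj
    have hj₁ : j < T.innerShape r i₁ :=
      T.lt_innerShape_iff.2 ⟨hj.trans_le (hl h12.le), by omega⟩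
    rw [if_pos hj₂, if_pos hj₁]
    exact hlt

theorem innerShape_addStrip (hl : Antitone l) (hμ : Interlaces μ l) (U : SSYT r μ) :
    (U.addStrip hl hμ).innerShape r = μ := by
  ext i
  refine eq_of_forall_lt_iff fun j => ?_
  rw [lt_innerShape_iff]
  simp only [addStrip]
  have := U.entry_le i j
  have := (hμ i).2
  split_ifs <;> omega

def innerShapeFiberEquiv (hl : Antitone l) (hμ : Interlaces μ l) :
    {T : SSYT (r + 1) l // T.innerShape r = μ} ≃ SSYT r μ where
  toFun T := T.1.restrict hl T.2
  invFun U := ⟨U.addStrip hl hμ, innerShape_addStrip hl hμ U⟩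
  left_inv := by
    rintro ⟨T, rfl⟩
    ext i j
    simp only [addStrip, restrict]
    have := T.entry_le i j
    have := T.innerShape_le (r := r) i
    have := T.lt_innerShape_iff (r := r) (i := i) (j := j)
    have := T.zero_outside i j
    split_ifs <;> omega
  right_inv U := by
    ext i j
    simp only [addStrip, restrict]
    have := U.zero_outside i j
    split_ifs <;> omega

end SSYT

def zeroExtend {r : ℕ} (v : Fin r → ℕ) (i : ℕ) : ℕ :=
  if h : i < r then v ⟨i, h⟩ else 0

def interlacingBox (r : ℕ) (l : ℕ → ℕ) : Finset (Fin r → ℕ) :=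
  Fintype.piFinset fun i => Icc (l (i + 1)) (l i)

section

variable {r : ℕ} {l : ℕ → ℕ}

@[simp]
theorem zeroExtend_val (v : Fin r → ℕ) (i : Fin r) : zeroExtend v i = v i :=
  dif_pos i.2

theorem zeroExtend_eq_zero (v : Fin r → ℕ) {i : ℕ} (hi : r ≤ i) : zeroExtend v i = 0 :=
  dif_neg hi.not_gt

theorem interlaces_zeroExtend (hsupp : ∀ i, r + 1 ≤ i → l i = 0) {v : Fin r → ℕ}
    (hv : v ∈ interlacingBox r l) : Interlaces (zeroExtend v) l := by
  intro i
  simp only [interlacingBox, Fintype.mem_piFinset, mem_Icc] at hv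
  by_cases h : i < r
  · simpa [zeroExtend, h] using hv ⟨i, h⟩
  · simp [zeroExtend, h, hsupp (i + 1) (by omega)]

theorem SSYT.innerShape_eq_zeroExtend_iff (hl : Antitone l) (T : SSYT (r + 1) l)
    (v : Fin r → ℕ) :
    T.innerShape r = zeroExtend v ↔ (fun i : Fin r => T.innerShape r i) = v := by
  constructor
  · intro h
    ext i
    simp [h]
  · rintro rfl
    ext i
    by_cases h : i < r
    · simp [zeroExtend, h]
    · rw [zeroExtend_eq_zero _ (not_lt.1 h), T.innerShape_eq_zero hl (not_lt.1 h)]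

theorem SSYT.card_succ_eq_sum (hl : Antitone l) (hsupp : ∀ i, r + 1 ≤ i → l i = 0) :
    Nat.card (SSYT (r + 1) l) = ∑ v ∈ interlacingBox r l, Nat.card (SSYT r (zeroExtend v)) := by
  have := SSYT.finite (k := r + 1) hl
  let shape : SSYT (r + 1) l → interlacingBox r l := fun T =>
    ⟨fun i => T.innerShape r i, by simp [interlacingBox, T.le_innerShape hl, T.innerShape_le]⟩
  have hfiber (v : interlacingBox r l) : {T // shape T = v} ≃ SSYT r (zeroExtend v.1) :=
    (Equiv.subtypeEquivRight fun T => by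
      rw [T.innerShape_eq_zeroExtend_iff hl, Subtype.ext_iff]).trans
    (SSYT.innerShapeFiberEquiv hl (interlaces_zeroExtend hsupp v.2))
  calc Nat.card (SSYT (r + 1) l)
      = Nat.card (Σ v, {T // shape T = v}) := Nat.card_congr (Equiv.sigmaFiberEquiv shape).symm
    _ = ∑ v : interlacingBox r l, Nat.card {T // shape T = v} := Nat.card_sigma
    _ = ∑ v : interlacingBox r l, Nat.card (SSYT r (zeroExtend v.1)) :=
      sum_congr rfl fun v _ => Nat.card_congr (hfiber v)
    _ = _ := sum_coe_sort _ fun v => Nat.card (SSYT r (zeroExtend v))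

-- Rows are read bottom-up, so that the arguments of the Vandermonde determinant increase.
theorem sum_interlacingBox_eq_sum_piFinset_Ico {M : Type*} [AddCommMonoid M]
    (l : ℕ → ℕ) (f : (Fin r → ℕ) → M) :
    ∑ v ∈ interlacingBox r l, f (fun i => v i.rev + i)
      = ∑ x ∈ Fintype.piFinset fun i : Fin r =>
          Ico (l i.castSucc.rev + i.castSucc) (l i.succ.rev + i.succ), f x := by
  have hcs (i : Fin r) : (i.castSucc.rev : ℕ) = i.rev + 1 := by simp [Fin.val_rev]; omega
  have hs (i : Fin r) : (i.succ.rev : ℕ) = i.rev := by simp [Fin.val_rev]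
  simp only [interlacingBox, hcs, hs, Fin.val_castSucc, Fin.val_succ]
  refine sum_nbij' (fun v i => v i.rev + i) (fun x i => x i.rev - i.rev) (fun v hv => ?_)
    (fun x hx => ?_) (fun v _ => ?_) (fun x hx => ?_) fun _ _ => rfl
  all_goals simp only [Fintype.mem_piFinset, mem_Icc, mem_Ico] at *
  · intro i
    have := hv i.rev
    omega
  · intro i
    have := hx i.rev
    simp only [Fin.rev_rev] at this
    omega
  · ext i
    simp
  · ext i
    have := hx i
    simp only [Fin.rev_rev]
    omega

end

theorem SSYT.det_vandermonde_mul_card (r : ℕ) {l : ℕ → ℕ} (hl : Antitone l)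
    (hsupp : ∀ i, r ≤ i → l i = 0) :
    (vandermonde fun i : Fin r => (i : ℚ)).det * Nat.card (SSYT r l)
      = (vandermonde fun i : Fin r => ((l i.rev + i : ℕ) : ℚ)).det := by
  induction r generalizing l with
  | zero => simp [SSYT.card_eq_one_of_shape_eq_zero fun i => hsupp i (Nat.zero_le i)]
  | succ r ih =>
    have hIH (v : Fin r → ℕ) (hv : v ∈ interlacingBox r l) :
        (vandermonde fun i : Fin r => (i : ℚ)).det * Nat.card (SSYT r (zeroExtend v))
          = (vandermonde fun i : Fin r => ((v i.rev + i : ℕ) : ℚ)).det := by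
      rw [ih (interlaces_zeroExtend hsupp hv).antitone fun i hi => zeroExtend_eq_zero v hi]
      simp only [zeroExtend_val]
    have hB (i : Fin r) : l i.castSucc.rev + i.castSucc ≤ l i.succ.rev + i.succ := by
      have : l i.castSucc.rev ≤ l i.succ.rev := hl (by simp [Fin.val_rev]; omega)
      simp only [Fin.val_castSucc, Fin.val_succ]
      omega
    calc (vandermonde fun i : Fin (r + 1) => (i : ℚ)).det * Nat.card (SSYT (r + 1) l)
        = r ! * ∑ v ∈ interlacingBox r l,
            (vandermonde fun i : Fin r => (i : ℚ)).det * Nat.card (SSYT r (zeroExtend v)) := by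
          rw [← factorial_mul_det_vandermonde_id, SSYT.card_succ_eq_sum hl hsupp, Nat.cast_sum,
            mul_assoc, mul_sum]
      _ = r ! * ∑ v ∈ interlacingBox r l,
            (vandermonde fun i : Fin r => ((v i.rev + i : ℕ) : ℚ)).det := by
          rw [sum_congr rfl hIH]
      _ = _ := by
          rw [sum_interlacingBox_eq_sum_piFinset_Ico l
            fun x => (vandermonde fun i => (x i : ℚ)).det]
          exact factorial_mul_sum_det_vandermonde_Ico (fun i : Fin (r + 1) => l i.rev + i) hB

theorem card_ssyt_staircase'_general (k : ℕ) :
    Nat.card (SSYT k (fun i => k - 1 - i)) = 2 ^ (k * (k - 1) / 2) := by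
  have h := SSYT.det_vandermonde_mul_card k (l := fun i => k - 1 - i)
    (fun i j hij => by dsimp; omega) (fun i hi => by omega)
  have hstaircase : (fun i : Fin k => ((k - 1 - i.rev + i : ℕ) : ℚ))
      = fun i : Fin k => 2 * ((i : ℕ) : ℚ) := by
    ext i
    rw [Fin.val_rev, show k - 1 - (k - (i + 1)) + i = 2 * i by omega]
    push_cast
    rfl
  have hne : (vandermonde fun i : Fin k => (i : ℚ)).det ≠ 0 :=
    det_vandermonde_ne_zero_iff.2 fun i j h => Fin.ext (by exact_mod_cast h)
  rw [hstaircase, det_vandermonde_const_mul, mul_comm (2 ^ _)] at h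
  exact_mod_cast mul_left_cancel₀ hne h

/-- The number of semistandard Young tableaux of staircase shape
`(k-1, k-2, ..., 1, 0)` with entries in `{1, ..., k}` equals `2^(k(k-1)/2)`. -/
theorem card_ssyt_staircase' (k : ℕ) (hk : 0 < k) :
    Nat.card (SSYT k (fun i => k - 1 - i)) = 2 ^ (k * (k - 1) / 2) :=
  card_ssyt_staircase'_general k
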